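/- Let n ≥ 2, let r > 0 and z = √(1 + r²). Then there exist a positive real number Ω₊ and a negative real number Ω₋ such that for Ω = Ω₊ and for Ω = Ω₋ the curves q_i(t) = (r cos(Ωt + 2π(i−1)/n), r sin(Ωt + 2π(i−1)/n), z), i = 1,…,n, form a solution of the curved n-body equations on H²; i.e., the regular polygon of n equal masses at constant height z admits elliptic relative equilibrium solutions with both a positive and a negative angular velocity. -/

import Mathlib

open Real

noncomputable section

/-- Lorentz inner product on `ℝ^{2,1} = ℝ × ℝ × ℝ`: `a⊙b = a₁b₁ + a₂b₂ − a₃b₃`. -/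
def ldot3 (a b : ℝ × ℝ × ℝ) : ℝ := a.1 * b.1 + a.2.1 * b.2.1 - a.2.2 * b.2.2

/-- The curved `n`-body problem on the hyperbolic plane `H²`, realized as the upper sheet
`{x² + y² − z² = −1, z > 0}` of the hyperboloid in `ℝ³` with the Lorentz product
(curvature `−1`), equal masses `mᵢ = 1`:  the curves stay on the upper sheet and satisfy
`q̈ᵢ = Σ_{j≠i} (qⱼ + (qᵢ⊙qⱼ) qᵢ)/((qᵢ⊙qⱼ)² − 1)^{3/2} + (q̇ᵢ⊙q̇ᵢ) qᵢ`. -/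
def IsHyperbolicSolution (n : ℕ) (q : Fin n → ℝ → ℝ × ℝ × ℝ) : Prop :=
  (∀ i t, ldot3 (q i t) (q i t) = -1 ∧ 0 < (q i t).2.2) ∧
  ∀ i t, deriv (deriv (q i)) t =
    (∑ j ∈ Finset.univ.erase i,
      (1 / (ldot3 (q i t) (q j t) ^ 2 - 1) ^ ((3 : ℝ) / 2)) •
        (q j t + ldot3 (q i t) (q j t) • q i t))
    + ldot3 (deriv (q i) t) (deriv (q i) t) • q i t

/-- The regular `n`-gon configuration rotating with angular velocity `Ω` on the circle of
radius `r` at height `z = √(1 + r²)` on the hyperboloid (bodies indexed by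
`i = 0,…,n−1`, corresponding to `i = 1,…,n` in the paper). -/
def polygonH (n : ℕ) (r Ω : ℝ) (i : Fin n) (t : ℝ) : ℝ × ℝ × ℝ :=
  (r * Real.cos (Ω * t + 2 * π * ((i : ℕ) : ℝ) / n),
   r * Real.sin (Ω * t + 2 * π * ((i : ℕ) : ℝ) / n),
   Real.sqrt (1 + r ^ 2))

/-!
Every vertex of the rotating polygon runs along the circle of radius `r` at height `√(1 + r²)`,
so its acceleration `-Ω² (r cos θ, r sin θ, 0)` is horizontal and radial. The pull of vertex `j`
on vertex `i` depends only on their angular distance `d`: it has a component along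
`r² qᵢ + (r cos θ, r sin θ, 0)` with coefficient `-(1 - cos d) / ((qᵢ⊙qⱼ)² − 1)^{3/2}` and a
tangential one whose coefficient is odd in `d`, so the tangential pulls cancel over the polygon.
With `q̇ᵢ⊙q̇ᵢ = r²Ω²` the equations of motion collapse to the single scalar equation
`Ω² = Σ_{k≠0} (1 − cos(2πk/n)) / ((q₀⊙q_k)² − 1)^{3/2}`, whose right side is positive.
-/

def ringPoint (r θ : ℝ) : ℝ × ℝ × ℝ := (r * cos θ, r * sin θ, √(1 + r ^ 2))

def ringRadial (r θ : ℝ) : ℝ × ℝ × ℝ := (r * cos θ, r * sin θ, 0)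

def ringTangent (r θ : ℝ) : ℝ × ℝ × ℝ := (-(r * sin θ), r * cos θ, 0)

def vertexAngle (n : ℕ) (k : Fin n) : ℝ := 2 * π * (k : ℕ) / n

/-- The factor `1 / ((qᵢ⊙qⱼ)² − 1)^{3/2}` for two points of the ring at angular distance `d`. -/
def ringForce (r d : ℝ) : ℝ := 1 / ((r ^ 2 * cos d - (1 + r ^ 2)) ^ 2 - 1) ^ ((3 : ℝ) / 2)

def polygonOmegaSq (n : ℕ) [NeZero n] (r : ℝ) : ℝ :=
  ∑ k ∈ Finset.univ.erase 0, ringForce r (vertexAngle n k) * (1 - cos (vertexAngle n k))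

lemma polygonH_eq_ringPoint (n : ℕ) (r Ω : ℝ) (i : Fin n) (t : ℝ) :
    polygonH n r Ω i t = ringPoint r (Ω * t + vertexAngle n i) := rfl

section RingGeometry

variable (r : ℝ)

lemma ldot3_ringPoint (α β : ℝ) :
    ldot3 (ringPoint r α) (ringPoint r β) = r ^ 2 * cos (α - β) - (1 + r ^ 2) := by
  simp only [ldot3, ringPoint, cos_sub, ← sq, sq_sqrt (by positivity : (0 : ℝ) ≤ 1 + r ^ 2)]
  ring

lemma ldot3_ringPoint_self (θ : ℝ) : ldot3 (ringPoint r θ) (ringPoint r θ) = -1 := by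
  simp [ldot3_ringPoint]

lemma ldot3_smul_ringTangent (Ω θ : ℝ) :
    ldot3 (Ω • ringTangent r θ) (Ω • ringTangent r θ) = Ω ^ 2 * r ^ 2 := by
  simp only [ldot3, ringTangent, Prod.smul_mk, smul_eq_mul]
  linear_combination Ω ^ 2 * r ^ 2 * sin_sq_add_cos_sq θ

lemma ringPoint_sub_add_ldot3_smul (θ d : ℝ) :
    ringPoint r (θ - d) + ldot3 (ringPoint r θ) (ringPoint r (θ - d)) • ringPoint r θ =
      -((1 - cos d) • (r ^ 2 • ringPoint r θ + ringRadial r θ) + sin d • ringTangent r θ) := by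
  rw [ldot3_ringPoint, sub_sub_cancel]
  simp only [ringPoint, ringRadial, ringTangent, cos_sub, sin_sub, Prod.smul_mk, smul_eq_mul,
    Prod.mk_add_mk, Prod.neg_mk]
  refine Prod.ext ?_ (Prod.ext ?_ ?_) <;> simp only <;> ring

lemma hasDerivAt_ringPoint (θ : ℝ) : HasDerivAt (ringPoint r) (ringTangent r θ) θ := by
  refine ((hasDerivAt_cos θ).const_mul r).prodMk (((hasDerivAt_sin θ).const_mul r).prodMk
    (hasDerivAt_const θ _)) |>.congr_deriv ?_
  simp [ringTangent]

lemma hasDerivAt_ringTangent (θ : ℝ) : HasDerivAt (ringTangent r) (-ringRadial r θ) θ := by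
  refine ((hasDerivAt_sin θ).const_mul r).neg.prodMk (((hasDerivAt_cos θ).const_mul r).prodMk
    (hasDerivAt_const θ _)) |>.congr_deriv ?_
  simp [ringRadial]

end RingGeometry

lemma hasDerivAt_mul_add (Ω φ t : ℝ) : HasDerivAt (fun s => Ω * s + φ) Ω t := by
  simpa using ((hasDerivAt_id t).const_mul Ω).add_const φ

lemma deriv_polygonH (n : ℕ) (r Ω : ℝ) (i : Fin n) :
    deriv (polygonH n r Ω i) = fun t => Ω • ringTangent r (Ω * t + vertexAngle n i) :=
  funext fun t => ((hasDerivAt_ringPoint r _).scomp t (hasDerivAt_mul_add Ω _ t)).deriv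

lemma deriv_deriv_polygonH (n : ℕ) (r Ω : ℝ) (i : Fin n) (t : ℝ) :
    deriv (deriv (polygonH n r Ω i)) t = -(Ω ^ 2 • ringRadial r (Ω * t + vertexAngle n i)) := by
  have h := ((hasDerivAt_ringTangent r _).scomp t (hasDerivAt_mul_add Ω (vertexAngle n i) t))
  rw [deriv_polygonH]
  exact (h.const_smul Ω).deriv.trans (by module)

section VertexSums

variable {n : ℕ} {α : Type*}

lemma Function.Periodic.vertexAngle_sub {f : ℝ → α} (hf : Function.Periodic f (2 * π))
    (a b : Fin n) :
    f (vertexAngle n (a - b)) = f (vertexAngle n a - vertexAngle n b) := by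
  have hn : (n : ℝ) ≠ 0 := Nat.cast_ne_zero.mpr (Fin.pos a).ne'
  rcases le_or_gt b a with hba | hab
  · rw [vertexAngle, Fin.coe_sub_iff_le.mpr hba, Nat.cast_sub hba, vertexAngle, vertexAngle]
    congr 1
    ring
  · rw [vertexAngle, Fin.coe_sub_iff_lt.mpr hab, Nat.cast_sub (by omega), Nat.cast_add,
      ← hf (vertexAngle n a - vertexAngle n b), vertexAngle, vertexAngle]
    congr 1
    field_simp
    ring

variable [NeZero n]

lemma sum_erase_vertexAngle_sub [AddCommMonoid α] {g : ℝ → α}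
    (hg : Function.Periodic g (2 * π)) (i : Fin n) :
    ∑ j ∈ Finset.univ.erase i, g (vertexAngle n i - vertexAngle n j) =
      ∑ k ∈ Finset.univ.erase 0, g (vertexAngle n k) := by
  refine Finset.sum_equiv (Equiv.subLeft i) (by simp [sub_eq_zero, eq_comm]) fun j _ => ?_
  exact (hg.vertexAngle_sub i j).symm

lemma sum_erase_vertexAngle_sub_of_odd {g : ℝ → ℝ} (hg : Function.Periodic g (2 * π))
    (hodd : g.Odd) (i : Fin n) :
    ∑ j ∈ Finset.univ.erase i, g (vertexAngle n i - vertexAngle n j) = 0 := by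
  have hsymm := sum_erase_vertexAngle_sub hg (0 : Fin n)
  have hzero : vertexAngle n 0 = 0 := by simp [vertexAngle]
  simp only [hzero, zero_sub, hodd _, Finset.sum_neg_distrib] at hsymm
  rw [sum_erase_vertexAngle_sub hg i]
  linarith

end VertexSums

lemma ringForce_periodic (r : ℝ) : Function.Periodic (ringForce r) (2 * π) := fun d => by
  simp [ringForce, cos_add_two_pi]

lemma ringForce_neg (r d : ℝ) : ringForce r (-d) = ringForce r d := by
  simp [ringForce, cos_neg]

lemma isHyperbolicSolution_polygonH {n : ℕ} [NeZero n] {r Ω : ℝ}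
    (hΩ : Ω ^ 2 = polygonOmegaSq n r) : IsHyperbolicSolution n (polygonH n r Ω) := by
  refine ⟨fun i t => ⟨ldot3_ringPoint_self r _, sqrt_pos.mpr (by positivity)⟩, fun i t => ?_⟩
  set θ := Ω * t + vertexAngle n i
  have hsummand : ∀ j ∈ Finset.univ.erase i,
      (1 / (ldot3 (polygonH n r Ω i t) (polygonH n r Ω j t) ^ 2 - 1) ^ ((3 : ℝ) / 2)) •
          (polygonH n r Ω j t + ldot3 (polygonH n r Ω i t) (polygonH n r Ω j t) •
            polygonH n r Ω i t) =
        -((ringForce r (vertexAngle n i - vertexAngle n j) *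
              (1 - cos (vertexAngle n i - vertexAngle n j))) •
            (r ^ 2 • ringPoint r θ + ringRadial r θ) +
          (ringForce r (vertexAngle n i - vertexAngle n j) *
              sin (vertexAngle n i - vertexAngle n j)) • ringTangent r θ) := by
    intro j _
    have hj : polygonH n r Ω j t = ringPoint r (θ - (vertexAngle n i - vertexAngle n j)) := by
      rw [polygonH_eq_ringPoint]
      congr 1
      ring
    rw [hj, polygonH_eq_ringPoint, ringPoint_sub_add_ldot3_smul, ldot3_ringPoint, sub_sub_cancel,
      ← ringForce]
    module
  have hcos : ∑ j ∈ Finset.univ.erase i, ringForce r (vertexAngle n i - vertexAngle n j) *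
      (1 - cos (vertexAngle n i - vertexAngle n j)) = Ω ^ 2 :=
    (sum_erase_vertexAngle_sub (g := fun d => ringForce r d * (1 - cos d))
      (fun d => by simp only [ringForce_periodic r d, cos_add_two_pi]) i).trans hΩ.symm
  have hsin : ∑ j ∈ Finset.univ.erase i, ringForce r (vertexAngle n i - vertexAngle n j) *
      sin (vertexAngle n i - vertexAngle n j) = 0 :=
    sum_erase_vertexAngle_sub_of_odd (g := fun d => ringForce r d * sin d)
      (fun d => by simp only [ringForce_periodic r d, sin_add_two_pi])
      (fun d => by simp only [ringForce_neg, sin_neg, mul_neg]) i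
  rw [Finset.sum_congr rfl hsummand, Finset.sum_neg_distrib, Finset.sum_add_distrib,
    ← Finset.sum_smul, ← Finset.sum_smul, hcos, hsin, deriv_deriv_polygonH, deriv_polygonH,
    ldot3_smul_ringTangent, polygonH_eq_ringPoint]
  module

lemma cos_vertexAngle_lt_one {n : ℕ} [NeZero n] {k : Fin n} (hk : k ≠ 0) :
    cos (vertexAngle n k) < 1 := by
  have hn : (0 : ℝ) < n := Nat.cast_pos.mpr (Fin.pos k)
  have hk : (0 : ℝ) < (k : ℕ) :=
    Nat.cast_pos.mpr (Nat.pos_of_ne_zero (Fin.val_ne_zero_iff.mpr hk))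
  have hpos : 0 < vertexAngle n k := by unfold vertexAngle; positivity
  have hlt : vertexAngle n k < 2 * π := by
    rw [vertexAngle, div_lt_iff₀ hn]
    exact mul_lt_mul_of_pos_left (Nat.cast_lt.mpr k.is_lt) two_pi_pos
  exact (cos_le_one _).lt_of_ne fun h =>
    hpos.ne' ((cos_eq_one_iff_of_lt_of_lt (by linarith) hlt).mp h)

lemma ringForce_pos {r d : ℝ} (hr : r ≠ 0) (hd : cos d < 1) : 0 < ringForce r d := by
  have hgap : 0 < r ^ 2 * (1 - cos d) := mul_pos (by positivity) (by linarith)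
  have : 0 < (r ^ 2 * cos d - (1 + r ^ 2)) ^ 2 - 1 := by nlinarith
  unfold ringForce
  positivity

lemma polygonOmegaSq_pos {n : ℕ} [NeZero n] (hn : 2 ≤ n) {r : ℝ} (hr : r ≠ 0) :
    0 < polygonOmegaSq n r := by
  refine Finset.sum_pos (fun k hk => ?_) ⟨⟨1, hn⟩, by simp [Fin.ext_iff]⟩
  have hcos := cos_vertexAngle_lt_one (Finset.ne_of_mem_erase hk)
  exact mul_pos (ringForce_pos hr hcos) (by linarith)

/-- For `n` equal masses on `H²` in a regular polygon configuration at height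
`z = √(1 + r²)` (with `r > 0`), there exist a positive and a negative angular velocity
making the rotating polygon an elliptic relative equilibrium solution. -/
theorem polygon_relative_equilibrium_exists_hyperbolic
    (n : ℕ) (hn : 2 ≤ n) (r : ℝ) (hr0 : 0 < r) :
    ∃ Ωp Ωm : ℝ, 0 < Ωp ∧ Ωm < 0 ∧
      IsHyperbolicSolution n (polygonH n r Ωp) ∧ IsHyperbolicSolution n (polygonH n r Ωm) := by
  have : NeZero n := ⟨by omega⟩
  have hω := polygonOmegaSq_pos hn hr0.ne'
  have hsq : √(polygonOmegaSq n r) ^ 2 = polygonOmegaSq n r := sq_sqrt hω.le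
  refine ⟨√(polygonOmegaSq n r), -√(polygonOmegaSq n r), sqrt_pos.mpr hω,
    neg_neg_of_pos (sqrt_pos.mpr hω), isHyperbolicSolution_polygonH hsq,
    isHyperbolicSolution_polygonH (by rw [neg_sq, hsq])⟩
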